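/- Define K(h,b) = (h + b^2)(1 - h)/R̄(b) with R̄(b) = (1/4)(1 + |b|/2)^4 for |b| ≤ 2 and R̄(b) = b^2 for |b| ≥ 2. Then the maximum over h ∈ [0, 1/2] of inf_{b ∈ R} K(h, b) is attained at h* = -22 + 10√5, with corresponding critical b* = -4 + 2√5, and b* = -4 + 2√5 is the unique root in [-4 + 2√5, 1/2] of the appropriate stationarity condition h = b - b^2/2 combined with ∂K/∂b = 0. -/

import Mathlib

/-!
With `h⋆ = -22 + 10√5` and `b⋆ = -4 + 2√5`, the curve `Rbar` lies below the parabola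
`h⋆ + b²` and touches it at `b⋆`. Hence `K(h⋆, ·) ≥ 1 - h⋆`, which is also its limit at
infinity, so `inf_b K(h⋆, b) = 1 - h⋆`. For `h > h⋆` the limit `1 - h` at infinity is already
smaller, and for `h ≤ h⋆` so is the value at `b⋆`. On `(0, 2)` the derivative `∂K/∂b` is a
positive multiple of `(1 - h)(b - b²/2 - h)`, which gives the stationarity condition;
`b ↦ b - b²/2` is injective on `b ≤ 1`, which gives uniqueness.
-/

/-- `R̄(b)`: squared minimal Chebyshev deviation for the quadratic case. -/
noncomputable def Rbar (b : ℝ) : ℝ := if |b| ≤ 2 then (1/4)*(1 + |b|/2)^4 else b^2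

/-- `K(h,b) = (h + b²)(1 - h)/R̄(b)`. -/
noncomputable def Kfun (h b : ℝ) : ℝ := (h + b^2) * (1 - h) / Rbar b

open Filter Set Topology

local notation "h⋆" => -22 + 10 * √5
local notation "b⋆" => -4 + 2 * √5

lemma sqrt_five_bounds : 2.2 < √5 ∧ √5 < 2.25 := by
  have h5 : √5 ^ 2 = 5 := Real.sq_sqrt (by norm_num)
  constructor <;> nlinarith [Real.sqrt_nonneg 5]

lemma Rbar_pos (b : ℝ) : 0 < Rbar b := by
  unfold Rbar
  split_ifs with hb
  · positivity
  · nlinarith [abs_nonneg b, sq_abs b]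

lemma Rbar_of_two_lt {b : ℝ} (hb : 2 < b) : Rbar b = b ^ 2 := by
  rw [Rbar, if_neg (by rw [abs_of_pos (by linarith)]; linarith)]

lemma Rbar_of_mem_Ioo {b : ℝ} (hb : b ∈ Ioo 0 2) : Rbar b = (2 + b) ^ 4 / 64 := by
  rw [Rbar, abs_of_pos hb.1, if_pos hb.2.le]
  ring

lemma Kfun_nonneg {h : ℝ} (hh : h ∈ Icc 0 1) (b : ℝ) : 0 ≤ Kfun h b :=
  div_nonneg (mul_nonneg (by nlinarith [hh.1, sq_nonneg b]) (by linarith [hh.2]))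
    (Rbar_pos b).le

lemma bddBelow_range_Kfun {h : ℝ} (hh : h ∈ Icc 0 1) : BddBelow (range (Kfun h)) :=
  ⟨0, by rintro _ ⟨b, rfl⟩; exact Kfun_nonneg hh b⟩

lemma one_sub_le_Kfun {h b : ℝ} (h1 : h ≤ 1) (hR : Rbar b ≤ h + b ^ 2) :
    1 - h ≤ Kfun h b := by
  rw [Kfun, le_div_iff₀ (Rbar_pos b)]
  nlinarith

/-- For `|b| ≤ 2` the gap is `(|b| - b⋆)² (4√5 - 1 - √5|b| - |b|²/4) / 16`: the graph of
`Rbar` touches the parabola `h⋆ + b²` exactly at `b = ± b⋆`. -/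
lemma Rbar_le_hStar_add_sq (b : ℝ) : Rbar b ≤ h⋆ + b ^ 2 := by
  obtain ⟨hs₁, hs₂⟩ := sqrt_five_bounds
  have h5 : √5 ^ 2 = 5 := Real.sq_sqrt (by norm_num)
  unfold Rbar
  split_ifs with hb
  · set t := |b|
    have ht : 0 ≤ t := abs_nonneg b
    have hquad : t ^ 2 / 4 + √5 * t + 1 - 4 * √5 ≤ 0 := by
      nlinarith [mul_nonneg (sub_nonneg.2 hb) (by linarith : (0:ℝ) ≤ √5),
        mul_nonneg ht (sub_nonneg.2 hb)]
    have hgap : h⋆ + t ^ 2 - (1/4) * (1 + t/2) ^ 4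
        = -(1/16) * ((t + 4 - 2 * √5) ^ 2 * (t ^ 2 / 4 + √5 * t + 1 - 4 * √5)) := by
      linear_combination ((-3/16) * t ^ 2 + 17/4 + (1/4) * t * √5 - √5) * h5
    nlinarith [mul_nonpos_of_nonneg_of_nonpos (sq_nonneg (t + 4 - 2 * √5)) hquad, sq_abs b]
  · linarith

lemma Rbar_bStar : Rbar b⋆ = h⋆ + (b⋆) ^ 2 := by
  obtain ⟨hs₁, hs₂⟩ := sqrt_five_bounds
  have h5 : √5 ^ 2 = 5 := Real.sq_sqrt (by norm_num)
  rw [Rbar_of_mem_Ioo ⟨by linarith, by linarith⟩]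
  linear_combination (√5 ^ 2 / 4 - √5 - 5 / 4) * h5

lemma tendsto_Kfun_atTop (h : ℝ) : Tendsto (Kfun h) atTop (𝓝 (1 - h)) := by
  have hinv : Tendsto (fun b : ℝ => (b ^ 2)⁻¹) atTop (𝓝 0) :=
    tendsto_inv_atTop_zero.comp (tendsto_pow_atTop two_ne_zero)
  have hlim : Tendsto (fun b : ℝ => (h * (b ^ 2)⁻¹ + 1) * (1 - h)) atTop
      (𝓝 ((h * 0 + 1) * (1 - h))) :=
    ((hinv.const_mul h).add_const 1).mul_const _
  rw [mul_zero, zero_add, one_mul] at hlim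
  refine hlim.congr' ?_
  filter_upwards [eventually_gt_atTop 2] with b hb
  rw [Kfun, Rbar_of_two_lt hb]
  field_simp

lemma sInf_range_Kfun_le {h : ℝ} (hh : h ∈ Icc 0 1) : sInf (range (Kfun h)) ≤ 1 - h :=
  ge_of_tendsto (tendsto_Kfun_atTop h)
    (Eventually.of_forall fun b => csInf_le (bddBelow_range_Kfun hh) ⟨b, rfl⟩)

lemma sInf_range_Kfun_hStar : sInf (range (Kfun h⋆)) = 1 - h⋆ := by
  obtain ⟨hs₁, hs₂⟩ := sqrt_five_bounds
  refine le_antisymm (sInf_range_Kfun_le ⟨by linarith, by linarith⟩) ?_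
  refine le_csInf (range_nonempty _) ?_
  rintro _ ⟨b, rfl⟩
  exact one_sub_le_Kfun (by linarith) (Rbar_le_hStar_add_sq b)

/-- `h ↦ (h + b⋆²)(1 - h)` increases up to `(1 - b⋆²)/2 > h⋆`. -/
lemma Kfun_bStar_le_of_le_hStar {h : ℝ} (hh : h ≤ h⋆) : Kfun h b⋆ ≤ 1 - h⋆ := by
  obtain ⟨hs₁, hs₂⟩ := sqrt_five_bounds
  have h5 : √5 ^ 2 = 5 := Real.sq_sqrt (by norm_num)
  have hR : 0 < h⋆ + (b⋆) ^ 2 := by nlinarith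
  rw [Kfun, Rbar_bStar, div_le_iff₀ hR]
  have hgap : (1 - h⋆) * (h⋆ + (b⋆) ^ 2) - (h + (b⋆) ^ 2) * (1 - h)
      = (h⋆ - h) * (1 - (b⋆) ^ 2 - h⋆ - h) := by ring
  nlinarith [mul_nonneg (sub_nonneg.2 hh) (by nlinarith : (0:ℝ) ≤ 1 - (b⋆) ^ 2 - h⋆ - h)]

lemma sInf_range_Kfun_le_hStar {h : ℝ} (hh : h ∈ Icc 0 1) :
    sInf (range (Kfun h)) ≤ sInf (range (Kfun h⋆)) := by
  rw [sInf_range_Kfun_hStar]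
  rcases le_or_gt h h⋆ with hle | hlt
  · exact (csInf_le (bddBelow_range_Kfun hh) ⟨b⋆, rfl⟩).trans (Kfun_bStar_le_of_le_hStar hle)
  · linarith [sInf_range_Kfun_le hh]

lemma hasDerivAt_Kfun {h b : ℝ} (hb : b ∈ Ioo 0 2) :
    HasDerivAt (Kfun h) (256 * (1 - h) * (b - b ^ 2 / 2 - h) / (2 + b) ^ 5) b := by
  have hpos : (0:ℝ) < 2 + b := by linarith [hb.1]
  have heq : (fun y => 64 * ((h + y ^ 2) * (1 - h)) / (2 + y) ^ 4) =ᶠ[𝓝 b] Kfun h := by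
    filter_upwards [Ioo_mem_nhds hb.1 hb.2] with y hy
    rw [Kfun, Rbar_of_mem_Ioo hy]
    field_simp
  have hnum :
      HasDerivAt (fun y => 64 * ((h + y ^ 2) * (1 - h))) (64 * (2 * b * (1 - h))) b := by
    simpa using (((hasDerivAt_pow 2 b).const_add h).mul_const (1 - h)).const_mul 64
  have hden : HasDerivAt (fun y : ℝ => (2 + y) ^ 4) (4 * (2 + b) ^ 3) b := by
    simpa using ((hasDerivAt_id b).const_add 2).fun_pow 4
  refine ((hnum.div hden (by positivity)).congr_of_eventuallyEq heq.symm).congr_deriv ?_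
  field_simp
  ring

lemma hStar_eq : h⋆ = b⋆ - (b⋆) ^ 2 / 2 := by
  linear_combination 2 * Real.sq_sqrt (show (0:ℝ) ≤ 5 by norm_num)

lemma deriv_Kfun_hStar_bStar : deriv (Kfun h⋆) b⋆ = 0 := by
  obtain ⟨hs₁, hs₂⟩ := sqrt_five_bounds
  rw [(hasDerivAt_Kfun ⟨by linarith, by linarith⟩).deriv, ← hStar_eq, sub_self, mul_zero,
    zero_div]

lemma eq_of_sub_sq_div_two_eq {b c : ℝ} (hbc : b + c < 2)
    (h : b - b ^ 2 / 2 = c - c ^ 2 / 2) : b = c := by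
  have hfac : (b - c) * (2 - b - c) = 0 := by linear_combination 2 * h
  rcases mul_eq_zero.mp hfac with h0 | h0
  · linarith
  · linarith

/-- The maximum over `h ∈ [0,1/2]` of `inf_{b ∈ ℝ} K(h,b)` is
attained at `h* = -22 + 10√5`, with critical point `b* = -4 + 2√5`, and `b*` is
the unique point in `[-4+2√5, 1/2]` satisfying the stationarity condition
`h* = b - b²/2` together with `∂K/∂b (h*, b) = 0`. -/
theorem maximin_quadratic_unbounded :
    ((-22 + 10 * Real.sqrt 5) ∈ Set.Icc (0:ℝ) (1/2)) ∧
    (∀ h ∈ Set.Icc (0:ℝ) (1/2),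
      sInf (Set.range (fun b => Kfun h b)) ≤
        sInf (Set.range (fun b => Kfun (-22 + 10 * Real.sqrt 5) b))) ∧
    (∃! b : ℝ, b ∈ Set.Icc (-4 + 2 * Real.sqrt 5) (1/2) ∧
      (-22 + 10 * Real.sqrt 5) = b - b^2/2 ∧
      deriv (fun y => Kfun (-22 + 10 * Real.sqrt 5) y) b = 0) ∧
    ((-4 + 2 * Real.sqrt 5) ∈ Set.Icc (-4 + 2 * Real.sqrt 5) (1/2) ∧
      (-22 + 10 * Real.sqrt 5) = (-4 + 2 * Real.sqrt 5) - (-4 + 2 * Real.sqrt 5)^2/2 ∧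
      deriv (fun y => Kfun (-22 + 10 * Real.sqrt 5) y) (-4 + 2 * Real.sqrt 5) = 0) := by
  obtain ⟨hs₁, hs₂⟩ := sqrt_five_bounds
  have hb_crit : b⋆ ∈ Icc (b⋆) (1/2) ∧ h⋆ = b⋆ - (b⋆) ^ 2 / 2 ∧ deriv (Kfun h⋆) b⋆ = 0 :=
    ⟨⟨le_rfl, by linarith⟩, hStar_eq, deriv_Kfun_hStar_bStar⟩
  refine ⟨⟨by linarith, by linarith⟩,
    fun h hh => sInf_range_Kfun_le_hStar ⟨hh.1, by linarith [hh.2]⟩, ⟨b⋆, hb_crit, ?_⟩, hb_crit⟩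
  rintro b ⟨hb, hstat, -⟩
  exact eq_of_sub_sq_div_two_eq (by linarith [hb.2]) (hstat.symm.trans hStar_eq)
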